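/- arXiv:2411.10835 — 2 statements merged into one kernel-verified Lean document; each statement's English description precedes it below -/
import Mathlib

section
/- Let ι and κ be finite types with decidable equality, let H be a complex inner product space, and let f : ι → κ and φ : ι → H. Define the well-formed state ψ : ι × κ → H by ψ (i, k) = if k = f i then φ i else 0, and its drop D ψ : ι → H by (D ψ) i = ∑ over k of ψ (i, k). Then ∑ over (i,k) of ‖ψ (i,k)‖² = ∑ over i of ‖φ i‖² and ∑ over i of ‖(D ψ) i‖² = ∑ over i of ‖φ i‖²; in particular the drop operation preserves the squared ℓ²-norm of every well-formed state. -/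
theorem drop_preserves_norm_of_wellFormed {ι κ : Type*}
    [Fintype ι] [Fintype κ] [DecidableEq κ]
    {H : Type*} [NormedAddCommGroup H] [InnerProductSpace ℂ H]
    (f : ι → κ) (φ : ι → H)
    (ψ : ι × κ → H) (hψ : ∀ i k, ψ (i, k) = if k = f i then φ i else 0)
    (Dψ : ι → H) (hD : ∀ i, Dψ i = ∑ k, ψ (i, k)) :
    (∑ p : ι × κ, ‖ψ p‖ ^ 2 = ∑ i, ‖φ i‖ ^ 2) ∧
    (∑ i, ‖Dψ i‖ ^ 2 = ∑ i, ‖φ i‖ ^ 2) := by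
  constructor
  · rw [Fintype.sum_prod_type]
    apply Finset.sum_congr rfl
    intro i _
    rw [Finset.sum_eq_single (f i)]
    · rw [hψ, if_pos rfl]
    · intro k _ hk; rw [hψ, if_neg hk, norm_zero]; ring
    · intro h; exact absurd (Finset.mem_univ _) h
  · apply Finset.sum_congr rfl
    intro i _
    rw [hD, Finset.sum_eq_single (f i)]
    · rw [hψ, if_pos rfl]
    · intro k _ hk; rw [hψ, if_neg hk]
    · intro h; exact absurd (Finset.mem_univ _) h
end

section
/- Define the involutions cx₁₂ (x, y) = (x, xor y x) and cx₂₁ (x, y) = (xor x y, y) of Bool × Bool, and the state v ∈ EuclideanSpace ℂ (Bool × Bool) by v (x, y) = if y = false then 1/√2 else 0 (the state |+⟩⊗|0⟩). Then the state w = v ∘ cx₁₂ ∘ cx₂₁ obtained by applying first cx₁₂ then cx₂₁ satisfies w (x, y) = if x = false then 1/√2 else 0, hence ‖w‖ = 1, and the drop of its second register, (D w) x = w (x, false) + w (x, true), has ‖D w‖² = 2. In particular no norm-nonincreasing linear map can perform the uncomputation of the second qubit of the output of this two-CNOT circuit. -/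
/-- CNOT with control on the first qubit and target on the second. -/
def cx12 : Bool × Bool → Bool × Bool := fun p => (p.1, xor p.2 p.1)

/-- CNOT with control on the second qubit and target on the first. -/
def cx21 : Bool × Bool → Bool × Bool := fun p => (xor p.1 p.2, p.2)

/-- The state `|+⟩ ⊗ |0⟩`. -/
noncomputable def v : EuclideanSpace ℂ (Bool × Bool) :=
  WithLp.toLp 2 (fun p => if p.2 = false then (1 / (Real.sqrt 2 : ℂ)) else 0)

/-- The result of applying first `cx12` and then `cx21` to `v`. -/
noncomputable def w : EuclideanSpace ℂ (Bool × Bool) := WithLp.toLp 2 (v ∘ cx12 ∘ cx21)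

/-- The drop (deallocation) of the second register. -/
noncomputable def dropW : EuclideanSpace ℂ Bool :=
  WithLp.toLp 2 (fun x => w (x, false) + w (x, true))

/-!
The circuit permutes the basis by `(x, y) ↦ (x ⊕ y, x)`, so it sends `|+⟩|0⟩` to `|0⟩|+⟩`: a
unit vector whose second register is still in superposition. Dropping that register adds its two
equal amplitudes coherently, giving `√2 |0⟩`, whose norm `√2` exceeds `‖w‖ = 1`; a
norm-nonincreasing map cannot produce it from `w`.
-/

lemma cx12_cx21 (p : Bool × Bool) : cx12 (cx21 p) = (xor p.1 p.2, p.1) := by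
  obtain ⟨x, y⟩ := p
  cases x <;> cases y <;> rfl

lemma w_apply (x y : Bool) :
    w (x, y) = if x = false then (1 / (Real.sqrt 2 : ℂ)) else 0 := by
  simp [w, v, cx12_cx21]

lemma norm_sq_one_div_sqrt_two : ‖(1 / (Real.sqrt 2 : ℂ))‖ ^ 2 = 1 / 2 := by
  rw [norm_div, norm_one, Complex.norm_real, Real.norm_of_nonneg (Real.sqrt_nonneg 2), div_pow,
    Real.sq_sqrt zero_le_two, one_pow]

lemma norm_w : ‖w‖ = 1 := by
  have h_sq : ‖w‖ ^ 2 = 1 := by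
    rw [EuclideanSpace.norm_sq_eq, Fintype.sum_prod_type]
    simp only [Fintype.sum_bool, w_apply, if_pos, norm_sq_one_div_sqrt_two]
    norm_num
  exact (pow_left_inj₀ (norm_nonneg w) zero_le_one two_ne_zero).1 (by rw [h_sq, one_pow])

lemma dropW_eq_single : dropW = PiLp.single 2 false (Real.sqrt 2 : ℂ) := by
  have h_two_div : 2 * (Real.sqrt 2 : ℂ)⁻¹ = Real.sqrt 2 := by
    rw [← div_eq_mul_inv, div_eq_iff (by exact_mod_cast (Real.sqrt_pos.2 zero_lt_two).ne'),
      ← Complex.ofReal_mul, Real.mul_self_sqrt zero_le_two, Complex.ofReal_ofNat]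
  ext x
  cases x <;> simp [dropW, w_apply, ← two_mul, h_two_div]

lemma norm_dropW_sq : ‖dropW‖ ^ 2 = 2 := by
  rw [dropW_eq_single, PiLp.norm_single, Complex.norm_real,
    Real.norm_of_nonneg (Real.sqrt_nonneg 2), Real.sq_sqrt zero_le_two]

theorem two_cnot_output_not_uncomputable :
    (∀ x y : Bool, w (x, y) = if x = false then (1 / (Real.sqrt 2 : ℂ)) else 0) ∧
    ‖w‖ = 1 ∧
    ‖dropW‖ ^ 2 = 2 ∧
    ¬ ∃ T : EuclideanSpace ℂ (Bool × Bool) →ₗ[ℂ] EuclideanSpace ℂ Bool,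
        (∀ χ, ‖T χ‖ ≤ ‖χ‖) ∧ T w = dropW := by
  refine ⟨w_apply, norm_w, norm_dropW_sq, ?_⟩
  rintro ⟨T, hT_contracts, hTw⟩
  have h_le : ‖dropW‖ ≤ ‖w‖ := hTw ▸ hT_contracts w
  have h_two_le_one : (2 : ℝ) ≤ 1 := by
    rw [← norm_dropW_sq, ← one_pow 2, ← norm_w]
    exact pow_le_pow_left₀ (norm_nonneg _) h_le 2
  norm_num at h_two_le_one
end
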